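/- arXiv:2006.06101 — 3 statements merged into one kernel-verified Lean document; each statement's English description precedes it below -/
import Mathlib

section
/- Let σ₀, σ ∈ S_n be cyclic permutations, Γ₁, Γ₂ proper subsets of Γ_{σ₀} = {(i,σ₀(i))} with σ(Γ₁) = Γ₂ (where permutations act diagonally on pairs), and let Π₁, Π₂ be the respective chain-closures of Γ₁, Γ₂ (Π_a = {(i,σ₀^r(i)) : all intermediate consecutive pairs lie in Γ_a}). Then σ(Π₁) = Π₂. -/
/-- for cyclic permutations `σ₀, σ ∈ S_n`, proper subsets `Γ₁, Γ₂ ⊊ Γ_{σ₀}` with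
`σ(Γ₁) = Γ₂` (diagonal action on pairs), the chain-closures satisfy `σ(Π₁) = Π₂`. -/
theorem stmt6 (n : ℕ) (σ₀ σ : Equiv.Perm (Fin n))
    (hσ₀ : σ₀.IsCycle ∧ σ₀.support = Finset.univ)
    (hσ : σ.IsCycle ∧ σ.support = Finset.univ)
    (Γσ₀ : Set (Fin n × Fin n)) (hΓσ₀ : Γσ₀ = {p : Fin n × Fin n | ∃ i, p = (i, σ₀ i)})
    (Γ₁ Γ₂ : Set (Fin n × Fin n)) (h1 : Γ₁ ⊂ Γσ₀) (h2 : Γ₂ ⊂ Γσ₀)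
    (himg : (fun p : Fin n × Fin n => (σ p.1, σ p.2)) '' Γ₁ = Γ₂)
    (Pi1 Pi2 : Set (Fin n × Fin n))
    (hPi1 : Pi1 = {p : Fin n × Fin n | ∃ (i : Fin n) (r : ℕ), 1 ≤ r ∧ p = (i, (σ₀ ^ r) i) ∧
      ∀ s : ℕ, s < r → ((σ₀ ^ s) i, (σ₀ ^ (s + 1)) i) ∈ Γ₁})
    (hPi2 : Pi2 = {p : Fin n × Fin n | ∃ (i : Fin n) (r : ℕ), 1 ≤ r ∧ p = (i, (σ₀ ^ r) i) ∧
      ∀ s : ℕ, s < r → ((σ₀ ^ s) i, (σ₀ ^ (s + 1)) i) ∈ Γ₂}) :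
    (fun p : Fin n × Fin n => (σ p.1, σ p.2)) '' Pi1 = Pi2 := by
  subst hΓσ₀ hPi1 hPi2
  -- edges in Γ₁ are of the form (k, σ₀ k), and σ maps them to edges (σ k, σ₀ (σ k))
  have hcomm : ∀ k : Fin n, (k, σ₀ k) ∈ Γ₁ → σ (σ₀ k) = σ₀ (σ k) := by
    intro k hk
    have hmem : ((σ k, σ (σ₀ k)) : Fin n × Fin n) ∈ Γ₂ := by
      rw [← himg]; exact ⟨(k, σ₀ k), hk, rfl⟩
    obtain ⟨i, hi⟩ := h2.1 hmem
    have h1' : σ k = i := congrArg Prod.fst hi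
    have h2' : σ (σ₀ k) = σ₀ i := congrArg Prod.snd hi
    rw [h2', ← h1']
  have hpow : ∀ (s : ℕ) (x : Fin n), (σ₀ ^ (s + 1)) x = σ₀ ((σ₀ ^ s) x) := by
    intro s x
    rw [pow_succ', Equiv.Perm.mul_apply]
  ext p
  constructor
  · rintro ⟨q, ⟨i, r, hr, rfl, hchain⟩, rfl⟩
    refine ⟨σ i, r, hr, ?_, ?_⟩
    · have claim : ∀ s ≤ r, σ ((σ₀ ^ s) i) = (σ₀ ^ s) (σ i) := by
        intro s hs
        induction s with
        | zero => simp
        | succ t ih =>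
          have ht : t < r := Nat.lt_of_succ_le hs
          rw [hpow t i, hcomm _ (by rw [← hpow t i]; exact hchain t ht),
            ih (Nat.le_of_lt ht), ← hpow t (σ i)]
      simp only [claim r le_rfl]
    · intro s hs
      have claim : ∀ u ≤ s + 1, σ ((σ₀ ^ u) i) = (σ₀ ^ u) (σ i) := by
        intro u hu
        induction u with
        | zero => simp
        | succ t ih =>
          have ht : t < r := lt_of_lt_of_le (Nat.lt_of_succ_le hu) hs
          rw [hpow t i, hcomm _ (by rw [← hpow t i]; exact hchain t ht),
            ih (Nat.le_of_succ_le hu), ← hpow t (σ i)]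
      rw [← claim s (Nat.le_succ s), ← claim (s + 1) le_rfl, ← himg]
      exact ⟨((σ₀ ^ s) i, (σ₀ ^ (s + 1)) i), hchain s hs, rfl⟩
  · rintro ⟨j, r, hr, rfl, hchain⟩
    set i := σ⁻¹ j with hi
    -- extract preimages of edges
    have hedge : ∀ s, s < r → ∃ a : Fin n, (a, σ₀ a) ∈ Γ₁ ∧ σ a = (σ₀ ^ s) j ∧
        σ (σ₀ a) = (σ₀ ^ (s + 1)) j := by
      intro s hs
      have hmem := hchain s hs
      rw [← himg] at hmem
      obtain ⟨⟨a, b⟩, hab, heq⟩ := hmem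
      obtain ⟨k, hk⟩ := h1.1 hab
      have hka : k = a := (congrArg Prod.fst hk).symm
      have hkb : σ₀ a = b := by rw [← hka]; exact (congrArg Prod.snd hk).symm
      subst hka
      refine ⟨k, by rwa [hkb], ?_, ?_⟩
      · exact congrArg Prod.fst heq
      · rw [hkb]; exact congrArg Prod.snd heq
    have claim : ∀ s ≤ r, σ ((σ₀ ^ s) i) = (σ₀ ^ s) j := by
      intro s hs
      induction s with
      | zero => simp [hi]
      | succ t ih =>
        have ht : t < r := Nat.lt_of_succ_le hs
        obtain ⟨a, haΓ, ha1, ha2⟩ := hedge t ht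
        have hat : a = (σ₀ ^ t) i := by
          have := ih (Nat.le_of_lt ht)
          apply σ.injective
          rw [ha1, this]
        rw [hpow t i, ← hat, ha2]
    refine ⟨(i, (σ₀ ^ r) i), ⟨i, r, hr, rfl, ?_⟩, ?_⟩
    · intro s hs
      obtain ⟨a, haΓ, ha1, ha2⟩ := hedge s hs
      have hat : a = (σ₀ ^ s) i := by
        apply σ.injective
        rw [ha1, claim s (Nat.le_of_lt hs)]
      rw [← hat, hpow s i, ← hat]
      exact haΓ
    · simp only
      rw [claim r le_rfl]
      exact Prod.ext (σ.apply_symm_apply j) rfl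
end

section
/- Let σ₀ be the standard n-cycle, Γ₁ ⊊ Γ_{σ₀} a proper subset with chain-closure Π₁ ⊆ {(i,j) : i ≠ j}, assume (n,1) ∉ Γ₁ (so every (i,j) ∈ Π₁ has i < j), and fix m with corresponding subsets M(O) = {(i,j) : (i < m and j < m) or (i ≥ m and j ≥ m)}. Let σ ∈ S_n and define the linear operator θ⁺ on Mat_n(k) by θ⁺(e_{ij}) = e_{σ(i)σ(j)} if (i,j) ∈ Π₁ and (i,j) ∈ M(O) (after projecting appropriately), and θ⁺(e_{ij}) = 0 otherwise, where for each (i,j) ∈ Π₁ there exists a positive integer r with (σ^r(i), σ^r(j)) ∉ Π₁. Then θ⁺ is nilpotent. -/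
/-!
The `(σᴺ x, σᴺ y)` entry of `θ⁺ᴺ a` is `a x y` masked by the requirement that every pair
`(σᵘ x, σᵘ y)` with `u < N` lies in `Π₁` (and in `M(O)`). Since `Π₁` is finite and each of its
points leaves `Π₁` under some power of `σ`, there is one bound `N` on these exit times, and then
every entry of `θ⁺ᴺ a` is masked out.
-/

open Matrix

/-- The operator `θ⁺ = σ ∘ π_{A₁⁺} ∘ π_O` on `Mat_n(k)`: it sends the matrix unit `e_{ij}` to
`e_{σ(i)σ(j)}` when `(i,j) ∈ Π₁` and `(i,j) ∈ M(O)` (i.e. `i,j < m` or `i,j ≥ m`),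
and to `0` otherwise. -/
noncomputable def thetaPlus (k : Type*) [Field k] {n : ℕ} (σ : Equiv.Perm (Fin n))
    (Pi1 : Finset (Fin n × Fin n)) (m : Fin n) :
    Module.End k (Matrix (Fin n) (Fin n) k) where
  toFun a := Matrix.of fun i j =>
    if (σ.symm i, σ.symm j) ∈ Pi1 ∧
        ((σ.symm i < m ∧ σ.symm j < m) ∨ (m ≤ σ.symm i ∧ m ≤ σ.symm j))
      then a (σ.symm i) (σ.symm j) else 0
  map_add' a b := by
    ext i j
    simp only [Matrix.of_apply, Matrix.add_apply]
    split <;> simp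
  map_smul' c a := by
    ext i j
    simp only [Matrix.of_apply, Matrix.smul_apply, RingHom.id_apply]
    split <;> simp

theorem Finset.exists_bound_forall_exists_pow_smul_notMem {M X : Type*} [Monoid M]
    [MulAction M X] (s : Finset X) (g : M) (h : ∀ x ∈ s, ∃ r : ℕ, g ^ r • x ∉ s) :
    ∃ N : ℕ, ∀ x, ∃ u < N, g ^ u • x ∉ s := by
  choose! r hr using h
  refine ⟨s.sup r + 1, fun x => ?_⟩
  by_cases hx : x ∈ s
  · exact ⟨r x, Nat.lt_succ_of_le (s.le_sup hx), hr x hx⟩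
  · exact ⟨0, Nat.succ_pos _, by rwa [pow_zero, one_smul]⟩

section thetaPlus

variable {k : Type*} [Field k] {n : ℕ} (σ : Equiv.Perm (Fin n))
  (Pi1 : Finset (Fin n × Fin n)) (m : Fin n)

theorem thetaPlus_apply_apply_apply (a : Matrix (Fin n) (Fin n) k) (x y : Fin n) :
    thetaPlus k σ Pi1 m a (σ x) (σ y) =
      if (x, y) ∈ Pi1 ∧ ((x < m ∧ y < m) ∨ (m ≤ x ∧ m ≤ y)) then a x y else 0 := by
  simp [thetaPlus]

theorem thetaPlus_pow_apply_eq_zero {N u : ℕ} (hu : u < N) {x y : Fin n}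
    (hxy : ((σ ^ u) x, (σ ^ u) y) ∉ Pi1) (a : Matrix (Fin n) (Fin n) k) :
    (thetaPlus k σ Pi1 m ^ N) a ((σ ^ N) x) ((σ ^ N) y) = 0 := by
  induction N with
  | zero => exact absurd hu (Nat.not_lt_zero u)
  | succ N ih =>
    rw [pow_succ', Module.End.mul_apply, pow_succ', Equiv.Perm.mul_apply, Equiv.Perm.mul_apply,
      thetaPlus_apply_apply_apply]
    rcases Nat.lt_succ_iff_lt_or_eq.mp hu with hlt | rfl
    · simp [ih hlt]
    · simp [hxy]

end thetaPlus

theorem stmt8_general {k : Type*} [Field k] {n : ℕ} (σ : Equiv.Perm (Fin n))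
    (Pi1 : Finset (Fin n × Fin n)) (m : Fin n)
    (hexit : ∀ p ∈ Pi1, ∃ r : ℕ, 0 < r ∧ ((σ ^ r) p.1, (σ ^ r) p.2) ∉ Pi1) :
    IsNilpotent (thetaPlus k σ Pi1 m) := by
  -- `σ ^ r • p` is the diagonal action `((σ ^ r) p.1, (σ ^ r) p.2)`, definitionally.
  obtain ⟨N, hN⟩ := Pi1.exists_bound_forall_exists_pow_smul_notMem σ
    fun p hp => (hexit p hp).imp fun _ hr => hr.2
  refine ⟨N, LinearMap.ext fun a => ?_⟩
  ext i j
  obtain ⟨x, rfl⟩ := (σ ^ N).surjective i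
  obtain ⟨y, rfl⟩ := (σ ^ N).surjective j
  obtain ⟨u, huN, hu⟩ := hN (x, y)
  exact thetaPlus_pow_apply_eq_zero σ Pi1 m huN hu a

/-- if every `(i,j) ∈ Π₁` satisfies `i < j` and for every `α ∈ Π₁` there is some
`r > 0` with `σ^r(α) ∉ Π₁`, then the operator `θ⁺` is nilpotent. -/
theorem stmt8 {k : Type*} [Field k] {n : ℕ} (σ : Equiv.Perm (Fin n))
    (Pi1 : Finset (Fin n × Fin n)) (m : Fin n)
    (hlt : ∀ p ∈ Pi1, p.1 < p.2)
    (hexit : ∀ p ∈ Pi1, ∃ r : ℕ, 0 < r ∧ ((σ ^ r) p.1, (σ ^ r) p.2) ∉ Pi1) :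
    IsNilpotent (thetaPlus k σ Pi1 m) :=
  stmt8_general σ Pi1 m hexit
end

section
/- Let L be a Lie subalgebra of g((t)) (g finite-dimensional over a field of characteristic 0) such that g((t)) = L + g[[t]] as vector spaces. Then g ⊗ k[[t]] ⊆ K·L where K·L denotes the k((t))-span of L; that is, the k((t))-span of L is all of g((t)). -/
/-!
If the `k((t))`-span of `L` were proper, some nonzero `k((t))`-linear functional `φ` on
`k((t)) ⊗ g` would vanish on `L`. As `g` is finite-dimensional, the Laurent series `φ (1 ⊗ x)`,
`x ∈ g`, have uniformly bounded poles, so `φ` maps `g[[t]]` into `t^N k[[t]]` for some `N`.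
Since `φ` is onto and `L + g[[t]]` is everything, `k((t)) = t^N k[[t]]`, which is absurd.
-/

open scoped TensorProduct

/- `k((t))` is a `k`-module through its `k`-algebra structure, not coefficientwise. -/
attribute [-instance] HahnSeries.instModule HahnSeries.instSMul HahnSeries.instSMulZeroClass

namespace LaurentSeries

section CommRing

variable {k : Type*} [CommRing k]

theorem zero_le_orderTop_ofPowerSeries (p : PowerSeries k) :
    0 ≤ (HahnSeries.ofPowerSeries ℤ k p).orderTop := by
  rw [HahnSeries.ofPowerSeries_apply, HahnSeries.orderTop_embDomain]
  cases (HahnSeries.toPowerSeries.symm p).orderTop with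
  | top => simp
  | coe n => simp

theorem le_orderTop_ofPowerSeries_mul {N : WithTop ℤ} (p : PowerSeries k) {f : LaurentSeries k}
    (hf : N ≤ f.orderTop) : N ≤ (HahnSeries.ofPowerSeries ℤ k p * f).orderTop :=
  calc N = 0 + N := (zero_add N).symm
    _ ≤ _ := add_le_add (zero_le_orderTop_ofPowerSeries p) hf
    _ ≤ _ := HahnSeries.orderTop_add_le_mul

variable (k) in
/-- `t^N k[[t]]`. -/
def orderGE (N : ℤ) : Submodule k (LaurentSeries k) where
  carrier := {f | (N : WithTop ℤ) ≤ f.orderTop}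
  zero_mem' := by simp
  add_mem' ha hb := by
    simp only [Set.mem_ofPred_eq] at ha hb ⊢
    exact le_trans (le_min ha hb) HahnSeries.min_orderTop_le_orderTop_add
  smul_mem' r f hf := by
    rw [Algebra.smul_def, HahnSeries.algebraMap_apply']
    exact le_orderTop_ofPowerSeries_mul _ hf

theorem mem_orderGE {N : ℤ} {f : LaurentSeries k} :
    f ∈ orderGE k N ↔ (N : WithTop ℤ) ≤ f.orderTop := by
  rfl

theorem orderGE_antitone : Antitone (orderGE k) := fun _ _ h _ hf =>
  le_trans (WithTop.coe_le_coe.mpr h) (mem_orderGE.mp hf)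

theorem ofPowerSeries_mul_mem_orderGE {N : ℤ} (p : PowerSeries k) {f : LaurentSeries k}
    (hf : f ∈ orderGE k N) : HahnSeries.ofPowerSeries ℤ k p * f ∈ orderGE k N :=
  le_orderTop_ofPowerSeries_mul p hf

theorem orderGE_ne_top [Nontrivial k] (N : ℤ) : orderGE k N ≠ ⊤ := by
  intro h
  have := mem_orderGE.mp (h ▸ Submodule.mem_top : HahnSeries.single (N - 1) (1 : k) ∈ orderGE k N)
  rw [HahnSeries.orderTop_single one_ne_zero] at this
  exact absurd (WithTop.coe_le_coe.mp this) (by omega)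

theorem _root_.Submodule.FG.exists_le_orderGE {S : Submodule k (LaurentSeries k)} (hS : S.FG) :
    ∃ N, S ≤ orderGE k N := by
  induction S, hS using Submodule.fg_induction with
  | singleton f =>
    refine ⟨f.order, (Submodule.span_singleton_le_iff_mem _ _).mpr (mem_orderGE.mpr ?_)⟩
    rcases eq_or_ne f 0 with rfl | hf
    · simp
    · rw [HahnSeries.order_eq_orderTop_of_ne_zero hf]
  | sup S₁ S₂ _ _ h₁ h₂ =>
    obtain ⟨N₁, hN₁⟩ := h₁
    obtain ⟨N₂, hN₂⟩ := h₂
    exact ⟨min N₁ N₂, sup_le (hN₁.trans (orderGE_antitone (min_le_left _ _)))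
      (hN₂.trans (orderGE_antitone (min_le_right _ _)))⟩

variable (k) (g : Type*) [AddCommGroup g] [Module k g]

/-- `g[[t]]`, as a `k`-subspace of `g((t)) = k((t)) ⊗ g`. -/
noncomputable def powerSeriesTensor : Submodule k (LaurentSeries k ⊗[k] g) :=
  Submodule.span k {z | ∃ (f : PowerSeries k) (x : g), z = HahnSeries.ofPowerSeries ℤ k f ⊗ₜ[k] x}

variable {k g}

theorem exists_map_powerSeriesTensor_le_orderGE [Module.Finite k g]
    (φ : LaurentSeries k ⊗[k] g →ₗ[LaurentSeries k] LaurentSeries k) :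
    ∃ N, (powerSeriesTensor k g).map (φ.restrictScalars k) ≤ orderGE k N := by
  let ψ : g →ₗ[k] LaurentSeries k :=
    φ.restrictScalars k ∘ₗ TensorProduct.mk k (LaurentSeries k) g 1
  obtain ⟨N, hN⟩ := (Module.Finite.iff_fg.mp (Module.Finite.range ψ)).exists_le_orderGE
  refine ⟨N, ?_⟩
  rw [powerSeriesTensor, Submodule.map_span_le]
  rintro _ ⟨f, x, rfl⟩
  have hφ : φ (HahnSeries.ofPowerSeries ℤ k f ⊗ₜ[k] x) = HahnSeries.ofPowerSeries ℤ k f * ψ x := by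
    have htmul : HahnSeries.ofPowerSeries ℤ k f ⊗ₜ[k] x =
        HahnSeries.ofPowerSeries ℤ k f • ((1 : LaurentSeries k) ⊗ₜ[k] x) := by
      rw [TensorProduct.smul_tmul', smul_eq_mul, mul_one]
    rw [htmul, map_smul, smul_eq_mul]
    rfl
  exact hφ ▸ ofPowerSeries_mul_mem_orderGE f (hN ⟨x, rfl⟩)

end CommRing

section Field

variable {k : Type*} [Field k]

theorem span_eq_top_of_sup_eq_top {V : Type*} [AddCommGroup V] [Module (LaurentSeries k) V]
    [Module k V] [IsScalarTower k (LaurentSeries k) V] {L P : Submodule k V}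
    (hP : ∀ φ : V →ₗ[LaurentSeries k] LaurentSeries k,
      ∃ N, P.map (φ.restrictScalars k) ≤ orderGE k N)
    (h : L ⊔ P = ⊤) : Submodule.span (LaurentSeries k) (L : Set V) = ⊤ := by
  by_contra hS
  obtain ⟨φ, hφ0, hφ⟩ := Submodule.exists_dual_map_eq_bot_of_lt_top (lt_top_iff_ne_top.mpr hS)
    inferInstance
  obtain ⟨N, hN⟩ := hP φ
  have hsurj : Function.Surjective φ := φ.surjective_or_eq_zero.resolve_right hφ0
  have hL : L.map (φ.restrictScalars k) = ⊥ := by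
    refine eq_bot_iff.mpr ?_
    rintro _ ⟨a, ha, rfl⟩
    have := Submodule.mem_map_of_mem (f := φ) (Submodule.subset_span (R := LaurentSeries k) ha)
    rwa [hφ] at this
  refine orderGE_ne_top (k := k) N (eq_top_iff.mpr ?_)
  calc ⊤ = (⊤ : Submodule k V).map (φ.restrictScalars k) := by
        rw [Submodule.map_top, (LinearMap.range_eq_top (f := φ.restrictScalars k)).mpr hsurj]
    _ = L.map (φ.restrictScalars k) ⊔ P.map (φ.restrictScalars k) := by rw [← h, Submodule.map_sup]
    _ ≤ orderGE k N := by rw [hL, bot_sup_eq]; exact hN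

end Field

end LaurentSeries

theorem stmt17_general (k : Type*) [Field k]
    (g : Type*) [LieRing g] [LieAlgebra k g] [FiniteDimensional k g]
    (L : Submodule k (LaurentSeries k ⊗[k] g))
    (PS : Submodule k (LaurentSeries k ⊗[k] g))
    (hPS : PS = Submodule.span k {z : LaurentSeries k ⊗[k] g |
      ∃ (f : PowerSeries k) (x : g), z = (HahnSeries.ofPowerSeries ℤ k f) ⊗ₜ[k] x})
    (hsum : L ⊔ PS = ⊤) :
    PS ≤ Submodule.restrictScalars k
        (Submodule.span (LaurentSeries k) (L : Set (LaurentSeries k ⊗[k] g))) ∧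
    Submodule.span (LaurentSeries k) (L : Set (LaurentSeries k ⊗[k] g)) = ⊤ := by
  have hspan : Submodule.span (LaurentSeries k) (L : Set (LaurentSeries k ⊗[k] g)) = ⊤ :=
    LaurentSeries.span_eq_top_of_sup_eq_top
      (fun φ => hPS ▸ LaurentSeries.exists_map_powerSeriesTensor_le_orderGE φ) hsum
  exact ⟨hspan ▸ le_top, hspan⟩

/-- if `L` is a Lie subalgebra of `g((t)) = k((t)) ⊗ g` (with `g`
finite-dimensional) such that `g((t)) = L + g[[t]]`, then `g ⊗ k[[t]]` is contained in the
`k((t))`-span of `L`; that is, the `k((t))`-span of `L` is all of `g((t))`. -/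
theorem stmt17 (k : Type*) [Field k] [CharZero k]
    (g : Type*) [LieRing g] [LieAlgebra k g] [FiniteDimensional k g]
    (L : Submodule k (LaurentSeries k ⊗[k] g))
    (hLie : ∀ a ∈ L, ∀ b ∈ L, ⁅a, b⁆ ∈ L)
    (PS : Submodule k (LaurentSeries k ⊗[k] g))
    (hPS : PS = Submodule.span k {z : LaurentSeries k ⊗[k] g |
      ∃ (f : PowerSeries k) (x : g), z = (HahnSeries.ofPowerSeries ℤ k f) ⊗ₜ[k] x})
    (hsum : L ⊔ PS = ⊤) :
    PS ≤ Submodule.restrictScalars k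
        (Submodule.span (LaurentSeries k) (L : Set (LaurentSeries k ⊗[k] g))) ∧
    Submodule.span (LaurentSeries k) (L : Set (LaurentSeries k ⊗[k] g)) = ⊤ :=
  stmt17_general k g L PS hPS hsum
end
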